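/- For a smooth function f with minimizer x*, if each f_i is convex and L-smooth and f = (1/N)∑ f_i, then (1/N)∑_{i=1}^N ‖∇f_i(x) − ∇f_i(x*)‖² ≤ 2L(f(x) − f(x*)) for all x. -/

import Mathlib

/-!
Each `fᵢ` obeys the cocoercivity bound `‖∇fᵢ x - ∇fᵢ y‖² ≤ 2L (fᵢ x - fᵢ y - ⟪∇fᵢ y, x - y⟫)`:
the tilted function `fᵢ - ⟪∇fᵢ y, ·⟫` is convex with vanishing gradient at `y`, hence minimal
there, while by the descent lemma a gradient step of length `1/L` from `x` lowers it by at least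
`‖∇fᵢ x - ∇fᵢ y‖² / (2L)`.
Averaging these bounds at `y = x*`, the linear terms average to `⟪∇f x*, x - x*⟫ = 0`.
-/

open Set
open scoped RealInnerProductSpace

variable {E : Type*} [NormedAddCommGroup E] [InnerProductSpace ℝ E] [CompleteSpace E]

lemma HasGradientAt.hasDerivAt_comp_add_smul {f : E → ℝ} {g x v : E} {t : ℝ}
    (hf : HasGradientAt f g (x + t • v)) :
    HasDerivAt (fun s : ℝ => f (x + s • v)) ⟪g, v⟫ t := by
  have hline : HasDerivAt (fun s : ℝ => x + s • v) v t := by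
    simpa using ((hasDerivAt_id t).smul_const v).const_add x
  have := (hasGradientAt_iff_hasFDerivAt.mp hf).comp_hasDerivAt t hline
  simpa [Function.comp_def] using this

lemma ConvexOn.add_inner_le_of_hasGradientAt {f : E → ℝ} {g y : E}
    (hf : ConvexOn ℝ univ f) (hg : HasGradientAt f g y) (x : E) :
    f y + ⟪g, x - y⟫ ≤ f x := by
  have hline : ConvexOn ℝ univ fun t : ℝ => f (y + t • (x - y)) := by
    simpa [Function.comp_def, AffineMap.lineMap_apply_module', add_comm] using
      hf.comp_affineMap (AffineMap.lineMap y x)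
  have hslope := hline.le_slope_of_hasDerivAt (mem_univ 0) (mem_univ 1) one_pos
    (HasGradientAt.hasDerivAt_comp_add_smul (by simpa using hg))
  simp [slope] at hslope
  linarith

lemma le_add_inner_add_mul_norm_sq_of_lipschitz {f : E → ℝ} {g : E → E} {L : ℝ}
    (hg : ∀ z, HasGradientAt f (g z) z) (hlip : ∀ a b, ‖g a - g b‖ ≤ L * ‖a - b‖)
    (x y : E) :
    f y ≤ f x + ⟪g x, y - x⟫ + L / 2 * ‖y - x‖ ^ 2 := by
  set v := y - x
  let φ : ℝ → ℝ := fun t => f (x + t • v) - t * ⟪g x, v⟫ - L / 2 * t ^ 2 * ‖v‖ ^ 2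
  have hφ : ∀ t,
      HasDerivAt φ (⟪g (x + t • v), v⟫ - ⟪g x, v⟫ - L * t * ‖v‖ ^ 2) t := by
    intro t
    have := (((hg (x + t • v)).hasDerivAt_comp_add_smul).sub
      ((hasDerivAt_id t).mul_const ⟪g x, v⟫)).sub
      (((hasDerivAt_pow 2 t).const_mul (L / 2)).mul_const (‖v‖ ^ 2))
    exact this.congr_deriv (by simp only [Nat.cast_ofNat, Nat.add_one_sub_one, pow_one]; ring)
  have hanti : AntitoneOn φ (Icc 0 1) := by
    refine antitoneOn_of_hasDerivWithinAt_nonpos (convex_Icc 0 1)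
      (fun t _ => (hφ t).continuousAt.continuousWithinAt)
      (fun t _ => (hφ t).hasDerivWithinAt) ?_
    intro t ht
    rw [interior_Icc] at ht
    calc ⟪g (x + t • v), v⟫ - ⟪g x, v⟫ - L * t * ‖v‖ ^ 2
        = ⟪g (x + t • v) - g x, v⟫ - L * t * ‖v‖ ^ 2 := by rw [inner_sub_left]
      _ ≤ ‖g (x + t • v) - g x‖ * ‖v‖ - L * t * ‖v‖ ^ 2 := by
        gcongr; exact real_inner_le_norm _ _
      _ ≤ L * ‖x + t • v - x‖ * ‖v‖ - L * t * ‖v‖ ^ 2 := by gcongr; exact hlip _ _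
      _ = 0 := by simp [norm_smul, abs_of_pos ht.1]; ring
  have := hanti (left_mem_Icc.2 zero_le_one) (right_mem_Icc.2 zero_le_one) zero_le_one
  simp [φ, v] at this
  linarith

lemma IsMinOn.sq_norm_le_of_lipschitz {f : E → ℝ} {g : E → E} {L : ℝ} {y : E} (hL : 0 < L)
    (hg : ∀ z, HasGradientAt f (g z) z) (hlip : ∀ a b, ‖g a - g b‖ ≤ L * ‖a - b‖)
    (hmin : IsMinOn f univ y) (x : E) :
    ‖g x‖ ^ 2 ≤ 2 * L * (f x - f y) := by
  have hstep := le_add_inner_add_mul_norm_sq_of_lipschitz hg hlip x (x - L⁻¹ • g x)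
  have hdescent : f (x - L⁻¹ • g x) ≤ f x - ‖g x‖ ^ 2 / (2 * L) := by
    have hnorm : ‖x - L⁻¹ • g x - x‖ = L⁻¹ * ‖g x‖ := by
      rw [sub_sub_cancel_left, norm_neg, norm_smul, Real.norm_of_nonneg (inv_nonneg.2 hL.le)]
    rw [hnorm, sub_sub_cancel_left, inner_neg_right, real_inner_smul_right,
      real_inner_self_eq_norm_sq] at hstep
    convert hstep using 1
    field_simp
    ring
  have hgap : ‖g x‖ ^ 2 / (2 * L) ≤ f x - f y := by
    linarith [isMinOn_univ_iff.mp hmin (x - L⁻¹ • g x)]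
  rwa [div_le_iff₀ (by positivity), mul_comm] at hgap

lemma ConvexOn.sq_norm_sub_le_of_lipschitz {f : E → ℝ} {g : E → E} {L : ℝ} (hL : 0 < L)
    (hf : ConvexOn ℝ univ f) (hg : ∀ z, HasGradientAt f (g z) z)
    (hlip : ∀ a b, ‖g a - g b‖ ≤ L * ‖a - b‖) (x y : E) :
    ‖g x - g y‖ ^ 2 ≤ 2 * L * (f x - f y - ⟪g y, x - y⟫) := by
  set F : E → ℝ := fun w => f w - ⟪g y, w⟫
  have hF : ∀ z, HasGradientAt F (g z - g y) z := by
    intro z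
    rw [hasGradientAt_iff_hasFDerivAt, map_sub]
    exact (hasGradientAt_iff_hasFDerivAt.mp (hg z)).sub
      (InnerProductSpace.toDual ℝ E (g y)).hasFDerivAt
  have hFconv : ConvexOn ℝ univ F := hf.sub ((innerₛₗ ℝ (g y)).concaveOn convex_univ)
  have hmin : IsMinOn F univ y := fun w _ => by
    simpa using hFconv.add_inner_le_of_hasGradientAt (hF y) w
  have := hmin.sq_norm_le_of_lipschitz hL hF (fun a b => by simpa using hlip a b) x
  rw [inner_sub_right]
  linarith

lemma IsLocalMin.mul_sum_inner_eq_zero {ι : Type*} (s : Finset ι) {f : ι → E → ℝ}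
    {g : ι → E} {x : E} (c : ℝ) (hg : ∀ i ∈ s, HasGradientAt (f i) (g i) x)
    (hmin : IsLocalMin (fun w => c * ∑ i ∈ s, f i w) x) (v : E) :
    c * ∑ i ∈ s, ⟪g i, v⟫ = 0 := by
  have hsum := (HasFDerivAt.fun_sum fun i hi =>
    hasGradientAt_iff_hasFDerivAt.mp (hg i hi)).const_mul c
  simpa using DFunLike.congr_fun (hmin.hasFDerivAt_eq_zero hsum) v

theorem stmt_13_general (d N : ℕ) (L : ℝ) (hL : 0 < L)
    (f : Fin N → EuclideanSpace ℝ (Fin d) → ℝ)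
    (hdiff : ∀ i, Differentiable ℝ (f i))
    (hconv : ∀ i, ConvexOn ℝ Set.univ (f i))
    (hlip : ∀ i x y, ‖gradient (f i) x - gradient (f i) y‖ ≤ L * ‖x - y‖)
    (xstar : EuclideanSpace ℝ (Fin d))
    (hstar : ∀ y, (N : ℝ)⁻¹ * ∑ i, f i xstar ≤ (N : ℝ)⁻¹ * ∑ i, f i y) :
    ∀ x, (N : ℝ)⁻¹ * ∑ i, ‖gradient (f i) x - gradient (f i) xstar‖ ^ 2
      ≤ 2 * L * ((N : ℝ)⁻¹ * ∑ i, f i x - (N : ℝ)⁻¹ * ∑ i, f i xstar) := by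
  intro x
  have hg : ∀ i z, HasGradientAt (f i) (gradient (f i) z) z :=
    fun i z => (hdiff i z).hasGradientAt
  have hcrit := IsLocalMin.mul_sum_inner_eq_zero Finset.univ (N : ℝ)⁻¹
    (fun i _ => hg i xstar) (Filter.Eventually.of_forall hstar) (x - xstar)
  calc (N : ℝ)⁻¹ * ∑ i, ‖gradient (f i) x - gradient (f i) xstar‖ ^ 2
      ≤ (N : ℝ)⁻¹ * ∑ i,
          2 * L * (f i x - f i xstar - ⟪gradient (f i) xstar, x - xstar⟫) := by
        gcongr with i
        exact (hconv i).sq_norm_sub_le_of_lipschitz hL (hg i) (hlip i) x xstar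
    _ = 2 * L * ((N : ℝ)⁻¹ * ∑ i, f i x - (N : ℝ)⁻¹ * ∑ i, f i xstar)
          - 2 * L * ((N : ℝ)⁻¹ * ∑ i, ⟪gradient (f i) xstar, x - xstar⟫) := by
        simp only [← Finset.mul_sum, Finset.sum_sub_distrib]; ring
    _ = 2 * L * ((N : ℝ)⁻¹ * ∑ i, f i x - (N : ℝ)⁻¹ * ∑ i, f i xstar) := by
        rw [hcrit, mul_zero, sub_zero]

/-- Variance transfer: for f = (1/N)∑ fᵢ with each fᵢ convex L-smooth and
x* a minimizer of f, (1/N)∑‖∇fᵢ(x) − ∇fᵢ(x*)‖² ≤ 2L(f(x) − f(x*)). -/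
theorem stmt_13 (d N : ℕ) (hN : 0 < N) (L : ℝ) (hL : 0 < L)
    (f : Fin N → EuclideanSpace ℝ (Fin d) → ℝ)
    (hdiff : ∀ i, Differentiable ℝ (f i))
    (hconv : ∀ i, ConvexOn ℝ Set.univ (f i))
    (hlip : ∀ i x y, ‖gradient (f i) x - gradient (f i) y‖ ≤ L * ‖x - y‖)
    (xstar : EuclideanSpace ℝ (Fin d))
    (hstar : ∀ y, (N : ℝ)⁻¹ * ∑ i, f i xstar ≤ (N : ℝ)⁻¹ * ∑ i, f i y) :
    ∀ x, (N : ℝ)⁻¹ * ∑ i, ‖gradient (f i) x - gradient (f i) xstar‖ ^ 2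
      ≤ 2 * L * ((N : ℝ)⁻¹ * ∑ i, f i x - (N : ℝ)⁻¹ * ∑ i, f i xstar) :=
  stmt_13_general d N L hL f hdiff hconv hlip xstar hstar
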